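/- Let B be a basic finite-dimensional k-algebra and suppose Hom_A(Q, Θ) ≅ Hom_A(Θ, Θ) = B as left B-modules, where Q = ⊕_{λ∈Λ} Q_λ with each Q_λ indecomposable-covering Θ_λ (there is a surjection Q_λ → Θ_λ), Θ = ⊕_{λ∈Λ} Θ_λ with the Θ_λ pairwise non-isomorphic indecomposables, and Λ finite. Then Hom_A(Q_λ, Θ) ≅ Hom_A(Θ_λ, Θ) as B-modules for every λ ∈ Λ. -/

import Mathlib

/-- A nonzero module with no nontrivial direct sum decomposition. -/
def IsIndecomp (A : Type) [Ring A] (X : Type) [AddCommGroup X] [Module A X] : Prop :=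
  (⊥ : Submodule A X) ≠ ⊤ ∧
  ∀ U V : Submodule A X, IsCompl U V → U = ⊥ ∨ V = ⊥

/-!
Precomposition with the surjection `Q_λ → Θ_λ` embeds `Hom_A(Θ_λ, Θ)` into `Hom_A(Q_λ, Θ)`,
compatibly with postcomposition by `B`. Since `k` acts through `B`, the `B`-isomorphism
`Hom_A(Q, Θ) ≅ Hom_A(Θ, Θ)` is `k`-linear, so `∑ dim_k Hom_A(Q_λ, Θ) = ∑ dim_k Hom_A(Θ_λ, Θ)`.
Against the termwise inequalities given by the embeddings, this forces every embedding to be an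
injection between spaces of the same finite dimension, hence onto.
-/

open Function LinearMap Module

theorem LinearMap.bijective_of_injective_of_linearEquiv_pi {K ι : Type*} [DivisionRing K]
    [Fintype ι] {M N : ι → Type*} [∀ i, AddCommGroup (M i)] [∀ i, Module K (M i)]
    [∀ i, AddCommGroup (N i)] [∀ i, Module K (N i)] [∀ i, FiniteDimensional K (M i)]
    (e : (∀ i, M i) ≃ₗ[K] ∀ i, N i) (f : ∀ i, N i →ₗ[K] M i) (hf : ∀ i, Injective (f i))
    (i : ι) : Bijective (f i) := by
  have := fun j => Module.Finite.of_injective (f j) (hf j)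
  have hle : ∀ j ∈ Finset.univ, finrank K (N j) ≤ finrank K (M j) :=
    fun j _ => finrank_le_finrank_of_injective (hf j)
  have hsum : ∑ j, finrank K (N j) = ∑ j, finrank K (M j) := by
    rw [← finrank_pi_fintype, ← finrank_pi_fintype, e.finrank_eq]
  have hi := (Finset.sum_eq_sum_iff_of_le hle).1 hsum i (Finset.mem_univ i)
  exact ⟨hf i, (injective_iff_surjective_of_finrank_eq_finrank hi).1 (hf i)⟩

theorem AddEquiv.map_smul_of_map_comp {S A X Y T : Type*} [Semiring S] [Ring A]
    [AddCommGroup X] [Module A X] [AddCommGroup Y] [Module A Y]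
    [AddCommGroup T] [Module A T] [Module S T] [SMulCommClass A S T]
    (e : (X →ₗ[A] T) ≃+ (Y →ₗ[A] T)) (he : ∀ (b : Module.End A T) f, e (b ∘ₗ f) = b ∘ₗ e f)
    (c : S) (f : X →ₗ[A] T) : e (c • f) = c • e f := by
  calc e (c • f) = e ((c • LinearMap.id : Module.End A T) ∘ₗ f) := by
        rw [LinearMap.smul_comp, LinearMap.id_comp]
    _ = (c • LinearMap.id : Module.End A T) ∘ₗ e f := he _ f
    _ = c • e f := by rw [LinearMap.smul_comp, LinearMap.id_comp]

theorem bijective_lcomp_of_addEquiv_map_comp {k A ι T : Type*} [Field k] [Ring A]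
    [Fintype ι] [AddCommGroup T] [Module A T] [Module k T] [SMulCommClass A k T]
    {X Y : ι → Type*} [∀ i, AddCommGroup (X i)] [∀ i, Module A (X i)]
    [∀ i, AddCommGroup (Y i)] [∀ i, Module A (Y i)] [∀ i, FiniteDimensional k (Y i →ₗ[A] T)]
    (π : ∀ i, Y i →ₗ[A] X i) (hπ : ∀ i, Surjective (π i))
    (e : ((∀ i, Y i) →ₗ[A] T) ≃+ ((∀ i, X i) →ₗ[A] T))
    (he : ∀ (b : Module.End A T) f, e (b ∘ₗ f) = b ∘ₗ e f) (i : ι) :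
    Bijective (lcomp k T (π i)) := by
  classical
  let e' : (∀ i, Y i →ₗ[A] T) ≃ₗ[k] ∀ i, X i →ₗ[A] T :=
    lsum A Y k ≪≫ₗ e.toLinearEquiv (e.map_smul_of_map_comp he) ≪≫ₗ (lsum A X k).symm
  exact bijective_of_injective_of_linearEquiv_pi e' (fun i => lcomp k T (π i))
    (fun i => lcomp_injective_of_surjective _ (hπ i)) i

theorem hom_Q_iso_hom_Theta_general
    (k : Type) [Field k] (A : Type) [Ring A] [Algebra k A] [FiniteDimensional k A]
    (Λ : Type) [Fintype Λ]
    (Θ Q : Λ → Type)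
    [∀ lam, AddCommGroup (Θ lam)] [∀ lam, Module A (Θ lam)]
    [∀ lam, AddCommGroup (Q lam)] [∀ lam, Module A (Q lam)]
    [∀ lam, Module.Finite A (Θ lam)] [∀ lam, Module.Finite A (Q lam)]
    (π : ∀ lam, Q lam →ₗ[A] Θ lam)
    (hπsurj : ∀ lam, Function.Surjective (π lam))
    -- `Hom_A(Q, Θ) ≅ Hom_A(Θ, Θ)` as left `B`-modules
    (hiso : ∃ e : ((Π nu, Q nu) →ₗ[A] (Π nu, Θ nu)) ≃+
        ((Π nu, Θ nu) →ₗ[A] (Π nu, Θ nu)),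
      ∀ (b : (Π nu, Θ nu) →ₗ[A] (Π nu, Θ nu))
        (f : (Π nu, Q nu) →ₗ[A] (Π nu, Θ nu)),
        e (b.comp f) = b.comp (e f)) :
    ∀ lam : Λ,
      ∃ e : ((Q lam) →ₗ[A] (Π nu, Θ nu)) ≃+ ((Θ lam) →ₗ[A] (Π nu, Θ nu)),
        ∀ (b : (Π nu, Θ nu) →ₗ[A] (Π nu, Θ nu)) (f : (Q lam) →ₗ[A] (Π nu, Θ nu)),
          e (b.comp f) = b.comp (e f) := by
  intro lam
  obtain ⟨e, he⟩ := hiso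
  let (ν : Λ) : Module k (Θ ν) := .compHom _ (algebraMap k A)
  let (ν : Λ) : Module k (Q ν) := .compHom _ (algebraMap k A)
  have (ν : Λ) : IsScalarTower k A (Θ ν) := .of_compHom k A (Θ ν)
  have (ν : Λ) : IsScalarTower k A (Q ν) := .of_compHom k A (Q ν)
  have (ν : Λ) : FiniteDimensional k (Θ ν) := Module.Finite.trans A (Θ ν)
  have (ν : Λ) : FiniteDimensional k (Q ν) := Module.Finite.trans A (Q ν)
  set E := AddEquiv.ofBijective (lcomp k _ (π lam))
    (bijective_lcomp_of_addEquiv_map_comp π hπsurj e he lam)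
  refine ⟨E.symm, fun b f => ?_⟩
  rw [E.symm_apply_eq]
  calc b ∘ₗ f = b ∘ₗ E (E.symm f) := by rw [E.apply_symm_apply]
    _ = E (b ∘ₗ E.symm f) := rfl

/-- If `B = End_A(Θ)` is basic and `Hom_A(Q, Θ) ≅ Hom_A(Θ, Θ) = B` as left
`B`-modules (i.e. via an additive isomorphism commuting with postcomposition), where
`Q = ⊕ Q_λ` with `Q_λ` indecomposable covering `Θ_λ` and `Θ = ⊕ Θ_λ` with `Θ_λ`
pairwise non-isomorphic indecomposables, then `Hom_A(Q_λ, Θ) ≅ Hom_A(Θ_λ, Θ)` as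
`B`-modules for every `λ`. -/
theorem hom_Q_iso_hom_Theta
    (k : Type) [Field k] (A : Type) [Ring A] [Algebra k A] [FiniteDimensional k A]
    (Λ : Type) [Fintype Λ] [PartialOrder Λ]
    (Θ Q : Λ → Type)
    [∀ lam, AddCommGroup (Θ lam)] [∀ lam, Module A (Θ lam)]
    [∀ lam, AddCommGroup (Q lam)] [∀ lam, Module A (Q lam)]
    [∀ lam, Module.Finite A (Θ lam)] [∀ lam, Module.Finite A (Q lam)]
    (hΘind : ∀ lam, IsIndecomp A (Θ lam))
    (hQind : ∀ lam, IsIndecomp A (Q lam))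
    (hΘdistinct : ∀ lam mu, lam ≠ mu → IsEmpty ((Θ lam) ≃ₗ[A] (Θ mu)))
    (π : ∀ lam, Q lam →ₗ[A] Θ lam)
    (hπsurj : ∀ lam, Function.Surjective (π lam))
    (hhom : ∀ nu mu : Λ, ¬ nu ≤ mu → ∀ f : Θ nu →ₗ[A] Θ mu, f = 0)
    -- `B` is basic: the projective `B`-modules `Hom_A(Θ_λ, Θ)` are pairwise
    -- non-isomorphic
    (hbasic : ∀ lam mu : Λ, lam ≠ mu →
      ¬ ∃ e : ((Θ lam) →ₗ[A] (Π nu, Θ nu)) ≃+ ((Θ mu) →ₗ[A] (Π nu, Θ nu)),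
        ∀ (b : (Π nu, Θ nu) →ₗ[A] (Π nu, Θ nu)) (f : (Θ lam) →ₗ[A] (Π nu, Θ nu)),
          e (b.comp f) = b.comp (e f))
    -- `Hom_A(Q, Θ) ≅ Hom_A(Θ, Θ)` as left `B`-modules
    (hiso : ∃ e : ((Π nu, Q nu) →ₗ[A] (Π nu, Θ nu)) ≃+
        ((Π nu, Θ nu) →ₗ[A] (Π nu, Θ nu)),
      ∀ (b : (Π nu, Θ nu) →ₗ[A] (Π nu, Θ nu))
        (f : (Π nu, Q nu) →ₗ[A] (Π nu, Θ nu)),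
        e (b.comp f) = b.comp (e f)) :
    ∀ lam : Λ,
      ∃ e : ((Q lam) →ₗ[A] (Π nu, Θ nu)) ≃+ ((Θ lam) →ₗ[A] (Π nu, Θ nu)),
        ∀ (b : (Π nu, Θ nu) →ₗ[A] (Π nu, Θ nu)) (f : (Q lam) →ₗ[A] (Π nu, Θ nu)),
          e (b.comp f) = b.comp (e f) :=
  hom_Q_iso_hom_Theta_general k A Λ Θ Q π hπsurj hiso
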